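/- Suppose p = 2, so I = I_1 ∪ I_2, and let λ_1, λ_2 > 0. Then both limits below exist and λ_2 ε_{I_2}(1) · lim_{t→∞} P(M(I_1) > 1 − λ_1/t | M(I_2) > 1 − λ_2/t) = λ_1 ε_{I_1}(1) · lim_{t→∞} P(M(I_2) > 1 − λ_2/t | M(I_1) > 1 − λ_1/t) = λ_1 ε_{I_1}(1) + λ_2 ε_{I_2}(1) − ε(λ_1^{-1}, λ_2^{-1}) (the conditional probabilities are well defined for all sufficiently large t). -/

import Mathlib

open MeasureTheory ProbabilityTheory Real Filter Topology
open scoped ProbabilityTheory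

noncomputable section

/-- Marginal Fréchet-type distribution function `F_i(t) = exp(-σ t^(-1/η))` for `t > 0`. -/
def margF (σ η t : ℝ) : ℝ := if 0 < t then Real.exp (-σ * t ^ (-1 / η)) else 0

/-- Joint distribution function of the random vector `X`. -/
def jointF {Ω : Type*} [MeasureSpace Ω] {d : ℕ} (X : Fin d → Ω → ℝ) (t : Fin d → ℝ) : ℝ :=
  (ℙ {ω | ∀ i, X i ω ≤ t i}).toReal

/-- Exponent function `ℓ(t) = -ln F_X(t)`. -/
def expo {Ω : Type*} [MeasureSpace Ω] {d : ℕ} (X : Fin d → Ω → ℝ) (t : Fin d → ℝ) : ℝ :=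
  -Real.log (jointF X t)

/-- Block maximum `M(I_j) = max_{i ∈ I_j} F_i(X_i)`, where `I_j = {i | B i = j}`. -/
def blockMax {Ω : Type*} [MeasureSpace Ω] {d p : ℕ} (B : Fin d → Fin p) (σ : Fin d → ℝ)
    (η : ℝ) (X : Fin d → Ω → ℝ) (j : Fin p) (ω : Ω) : ℝ :=
  sSup ((fun i => margF (σ i) η (X i ω)) '' {i | B i = j})

/-- Extremal dependence function
`ε(λ₁,…,λ_p) = E(max_j M(I_j)^(λ_j)) / (1 - E(max_j M(I_j)^(λ_j)))`. -/
def epsFun {Ω : Type*} [MeasureSpace Ω] {d p : ℕ} (B : Fin d → Fin p) (σ : Fin d → ℝ)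
    (η : ℝ) (X : Fin d → Ω → ℝ) (l : Fin p → ℝ) : ℝ :=
  (∫ ω, ⨆ j, blockMax B σ η X j ω ^ l j ∂ℙ) /
    (1 - ∫ ω, ⨆ j, blockMax B σ η X j ω ^ l j ∂ℙ)

/-- Single-block extremal dependence function `ε_{I_j}(λ)`. -/
def epsBlock {Ω : Type*} [MeasureSpace Ω] {d p : ℕ} (B : Fin d → Fin p) (σ : Fin d → ℝ)
    (η : ℝ) (X : Fin d → Ω → ℝ) (j : Fin p) (l : ℝ) : ℝ :=
  (∫ ω, blockMax B σ η X j ω ^ l ∂ℙ) / (1 - ∫ ω, blockMax B σ η X j ω ^ l ∂ℙ)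

/-!
Write `θ_j` for the extremal coefficient of block `j` and `Λ(w) = ℓ((σᵢ / w_{B i})^η)`.
Homogeneity of `ℓ` makes `Λ` homogeneous of degree one and gives `P(M(I_j) ≤ u) = u ^ θ_j`
(homogeneity passes to the block's own coordinates by sending the others to `∞`) and
`P(M(I_j) ≤ u ^ λ_j for all j) = u ^ Λ(λ)`. A `[0, 1]`-valued variable with distribution function
`u ^ θ` has mean `θ / (θ + 1)`, so `ε_{I_j}(1) = θ_j` and `ε(λ₁⁻¹, λ₂⁻¹) = Λ(λ)`.
By inclusion–exclusion the joint exceedance probability at level `1 - λ/t` is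
`(1 - u₁^θ₁) + (1 - u₂^θ₂) - (1 - exp (-Λ(-log u)))`; since `t (1 - exp (-a_t)) → lim t a_t`
and `t Λ(-log (1 - λ/t)) = Λ(-t log (1 - λ/t)) → Λ(λ)` (a monotone homogeneous function is
continuous), `t` times it tends to `λ₁ θ₁ + λ₂ θ₂ - Λ(λ)`, while `t P(M(I_j) > 1 - λ_j/t) → λ_j θ_j`.
-/

open Set

lemma tendsto_mul_one_sub_exp_neg {f : ℝ → ℝ} {A : ℝ}
    (h : Tendsto (fun t => t * f t) atTop (𝓝 A)) :
    Tendsto (fun t => t * (1 - exp (-f t))) atTop (𝓝 A) := by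
  have hf : Tendsto f atTop (𝓝 0) := by
    have := h.mul tendsto_inv_atTop_zero
    rw [mul_zero] at this
    refine this.congr' ?_
    filter_upwards [eventually_ne_atTop 0] with t ht
    field_simp
  have hbound : Tendsto (fun t => ‖t * f t‖ * ‖f t‖) atTop (𝓝 0) := by
    simpa using h.norm.mul hf.norm
  have herr : Tendsto (fun t => t * (1 - exp (-f t)) - t * f t) atTop (𝓝 0) := by
    refine squeeze_zero_norm' ?_ hbound
    filter_upwards [hf.eventually (Metric.closedBall_mem_nhds 0 one_pos)] with t ht
    have hft : |-f t| ≤ 1 := by simpa [Real.dist_eq] using ht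
    have key := Real.abs_exp_sub_one_sub_id_le hft
    rw [Real.norm_eq_abs, Real.norm_eq_abs, Real.norm_eq_abs, ← mul_sub, abs_mul, abs_mul,
      mul_assoc]
    calc |t| * |1 - exp (-f t) - f t| = |t| * |exp (-f t) - 1 - -f t| := by
          rw [← abs_neg (exp (-f t) - 1 - -f t)]; ring_nf
      _ ≤ |t| * (-f t) ^ 2 := by gcongr
      _ = |t| * (|f t| * |f t|) := by rw [neg_sq, ← sq_abs, sq]
  simpa using herr.add h

lemma one_sub_div_mem_Ioo {l t : ℝ} (hl : 0 < l) (ht : l < t) : 1 - l / t ∈ Ioo 0 1 :=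
  ⟨sub_pos.2 ((div_lt_one (hl.trans ht)).2 ht), sub_lt_self _ (div_pos hl (hl.trans ht))⟩

lemma tendsto_mul_neg_log_one_sub_div (l : ℝ) :
    Tendsto (fun t => t * -log (1 - l / t)) atTop (𝓝 l) := by
  simpa [neg_div, ← sub_eq_add_neg] using (Real.tendsto_mul_log_one_add_div_atTop (-l)).neg

lemma tendsto_mul_div_of_tendsto_mul {N D : ℝ → ℝ} {a b : ℝ}
    (hN : Tendsto (fun t => t * N t) atTop (𝓝 a)) (hD : Tendsto (fun t => t * D t) atTop (𝓝 b))
    (hb : b ≠ 0) : Tendsto (fun t => b * (N t / D t)) atTop (𝓝 a) := by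
  have := (hN.div hD hb).const_mul b
  rw [mul_div_cancel₀ _ hb] at this
  refine this.congr' ?_
  filter_upwards [eventually_ne_atTop 0] with t ht
  simp only [Pi.div_apply, mul_div_mul_left _ _ ht]

/-- Near `w` the argument lies between `(1 - ε) • w` and `(1 + ε) • w`. -/
lemma tendsto_comp_of_monotone_of_homogeneous {ι α : Type*} [Finite ι] {Λ : (ι → ℝ) → ℝ}
    (hmono : ∀ ⦃v w : ι → ℝ⦄, (∀ j, 0 < v j) → v ≤ w → Λ v ≤ Λ w)
    (hhom : ∀ c : ℝ, 0 < c → ∀ v : ι → ℝ, (∀ j, 0 < v j) → Λ (c • v) = c * Λ v)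
    {w : ι → ℝ} (hw : ∀ j, 0 < w j) {l : Filter α} {f : α → ι → ℝ}
    (hf : Tendsto f l (𝓝 w)) : Tendsto (fun x => Λ (f x)) l (𝓝 (Λ w)) := by
  rw [Metric.tendsto_nhds]
  intro δ hδ
  set ε := min (1 / 2) (δ / (2 * (|Λ w| + 1)))
  have hε0 : 0 < ε := lt_min (by norm_num) (by positivity)
  have hε1 : ε < 1 := (min_le_left _ _).trans_lt (by norm_num)
  have hεδ : ε * |Λ w| < δ := by
    have : ε * (2 * (|Λ w| + 1)) ≤ δ :=
      (le_div_iff₀ (by positivity)).1 (min_le_right _ _)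
    nlinarith [abs_nonneg (Λ w)]
  have hnear : ∀ᶠ x in l, ∀ j, f x j ∈ Ioo ((1 - ε) * w j) ((1 + ε) * w j) := by
    refine eventually_all.2 fun j => (tendsto_pi_nhds.1 hf j).eventually (Ioo_mem_nhds ?_ ?_)
    · nlinarith [hw j]
    · nlinarith [hw j]
  filter_upwards [hnear] with x hx
  have hlow : (1 - ε) * Λ w ≤ Λ (f x) := by
    rw [← hhom _ (by linarith) w hw]
    exact hmono (fun j => mul_pos (by linarith) (hw j)) fun j => (hx j).1.le
  have hup : Λ (f x) ≤ (1 + ε) * Λ w := by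
    rw [← hhom _ (by linarith) w hw]
    exact hmono (fun j => (mul_pos (by linarith) (hw j)).trans (hx j).1) fun j => (hx j).2.le
  have habs := mul_le_mul_of_nonneg_left (le_abs_self (Λ w)) hε0.le
  have habs' := mul_le_mul_of_nonneg_left (neg_abs_le (Λ w)) hε0.le
  rw [Real.dist_eq, abs_lt]
  constructor <;> nlinarith

lemma margF_nonneg (σ η t : ℝ) : 0 ≤ margF σ η t := by
  unfold margF; split_ifs <;> positivity

lemma margF_le_one {σ : ℝ} (hσ : 0 ≤ σ) (η t : ℝ) : margF σ η t ≤ 1 := by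
  unfold margF
  split_ifs with ht
  · rw [exp_le_one_iff, neg_mul, neg_nonpos]
    exact mul_nonneg hσ (rpow_nonneg ht.le _)
  · exact zero_le_one

lemma measurable_margF (σ η : ℝ) : Measurable (margF σ η) :=
  Measurable.ite measurableSet_Ioi (by fun_prop) measurable_const

lemma margF_le_iff {σ η u : ℝ} (hσ : 0 < σ) (hη : 0 < η) (hu : u ∈ Ioo 0 1) (x : ℝ) :
    margF σ η x ≤ u ↔ x ≤ (σ / -log u) ^ η := by
  have hc : 0 < -log u := neg_pos.2 (log_neg hu.1 hu.2)
  unfold margF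
  split_ifs with hx
  · have hxη : 0 < x ^ η⁻¹ := rpow_pos_of_pos hx _
    have hpow : σ / x ^ η⁻¹ = σ * x ^ (-1 / η) := by
      rw [div_eq_mul_inv, ← rpow_neg hx.le, neg_div, one_div]
    rw [← rpow_inv_le_iff_of_pos hx.le (by positivity) hη, le_div_iff₀ hc, ← le_div_iff₀' hxη,
      hpow, ← log_le_log_iff (exp_pos _) hu.1, log_exp, neg_mul]
    constructor <;> intro h <;> linarith
  · exact iff_of_true hu.1.le ((not_lt.1 hx).trans (by positivity))

section BlockMax

variable {Ω : Type*} [MeasureSpace Ω] {d p : ℕ} {B : Fin d → Fin p} {σ : Fin d → ℝ} {η : ℝ}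
  {X : Fin d → Ω → ℝ}

lemma blockMax_nonneg (j : Fin p) (ω : Ω) : 0 ≤ blockMax B σ η X j ω :=
  Real.sSup_nonneg (by rintro _ ⟨i, -, rfl⟩; exact margF_nonneg _ _ _)

-- an empty block has `blockMax = sSup ∅ = 0`
lemma blockMax_le_iff {u : ℝ} (hu : 0 ≤ u) (j : Fin p) (ω : Ω) :
    blockMax B σ η X j ω ≤ u ↔ ∀ i, B i = j → margF (σ i) η (X i ω) ≤ u := by
  refine ⟨fun h i hi => (le_csSup ((toFinite _).image _).bddAbove ⟨i, hi, rfl⟩).trans h,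
    fun h => Real.sSup_le ?_ hu⟩
  rintro _ ⟨i, hi, rfl⟩
  exact h i hi

lemma blockMax_le_iff_of_mem_Ioo (hσ : ∀ i, 0 < σ i) (hη : 0 < η) {u : ℝ} (hu : u ∈ Ioo 0 1)
    (j : Fin p) (ω : Ω) :
    blockMax B σ η X j ω ≤ u ↔ ∀ i, B i = j → X i ω ≤ (σ i / -log u) ^ η := by
  simp only [blockMax_le_iff hu.1.le, margF_le_iff (hσ _) hη hu]

lemma blockMax_le_one (hσ : ∀ i, 0 ≤ σ i) (j : Fin p) (ω : Ω) : blockMax B σ η X j ω ≤ 1 :=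
  (blockMax_le_iff zero_le_one j ω).2 fun i _ => margF_le_one (hσ i) _ _

lemma measurable_blockMax (hX : ∀ i, Measurable (X i)) (j : Fin p) :
    Measurable (blockMax B σ η X j) := by
  refine measurable_of_Iic fun u => ?_
  rcases lt_or_ge u 0 with hu | hu
  · convert MeasurableSet.empty
    exact eq_empty_of_forall_notMem fun ω hω => (hu.trans_le (blockMax_nonneg j ω)).not_ge hω
  · have hpre : blockMax B σ η X j ⁻¹' Iic u =
        ⋂ i ∈ {i | B i = j}, X i ⁻¹' (margF (σ i) η ⁻¹' Iic u) := by
      ext ω; simp [blockMax_le_iff hu]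
    rw [hpre]
    exact MeasurableSet.biInter (to_countable _)
      fun i _ => hX i (measurable_margF _ _ measurableSet_Iic)

end BlockMax

section JointLaw

variable {Ω : Type*} [MeasureSpace Ω] {d p : ℕ} {X : Fin d → Ω → ℝ} {σ : Fin d → ℝ} {η : ℝ}
  {B : Fin d → Fin p}

lemma jointF_eq_exp_neg_expo (hpos : ∀ t : Fin d → ℝ, (∀ i, 0 < t i) → 0 < jointF X t)
    {t : Fin d → ℝ} (ht : ∀ i, 0 < t i) : jointF X t = exp (-expo X t) := by
  rw [expo, neg_neg, exp_log (hpos t ht)]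

lemma jointF_mul (hpos : ∀ t : Fin d → ℝ, (∀ i, 0 < t i) → 0 < jointF X t)
    (hhom : ∀ c : ℝ, 0 < c → ∀ t : Fin d → ℝ, (∀ i, 0 < t i) →
      expo X (fun i => c * t i) = c ^ (-1 / η) * expo X t)
    {c : ℝ} (hc : 0 < c) {t : Fin d → ℝ} (ht : ∀ i, 0 < t i) :
    jointF X (fun i => c * t i) = jointF X t ^ c ^ (-1 / η) := by
  rw [jointF_eq_exp_neg_expo hpos fun i => mul_pos hc (ht i), hhom c hc t ht,
    jointF_eq_exp_neg_expo hpos ht, ← exp_mul]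
  ring_nf

variable (X σ η B) in
/-- The block maxima satisfy `P(M(I_j) ≤ e^{-w_j} for all j) = exp (-blockExpo X σ η B w)`
(`toReal_prob_forall_blockMax_le`). -/
def blockExpo (w : Fin p → ℝ) : ℝ :=
  expo X fun i => (σ i / w (B i)) ^ η

lemma blockExpo_smul (hσ : ∀ i, 0 < σ i) (hη : 0 < η)
    (hhom : ∀ c : ℝ, 0 < c → ∀ t : Fin d → ℝ, (∀ i, 0 < t i) →
      expo X (fun i => c * t i) = c ^ (-1 / η) * expo X t)
    {c : ℝ} (hc : 0 < c) {w : Fin p → ℝ} (hw : ∀ j, 0 < w j) :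
    blockExpo X σ η B (c • w) = c * blockExpo X σ η B w := by
  have hscale : (fun i => (σ i / (c • w) (B i)) ^ η) =
      fun i => c ^ (-η) * (σ i / w (B i)) ^ η := by
    funext i
    rw [Pi.smul_apply, smul_eq_mul, div_mul_eq_div_div_swap, div_eq_inv_mul _ c,
      mul_rpow (inv_nonneg.2 hc.le) (div_pos (hσ i) (hw _)).le, inv_rpow hc.le, rpow_neg hc.le]
  rw [blockExpo, hscale, hhom _ (rpow_pos_of_pos hc _) _
    fun i => rpow_pos_of_pos (div_pos (hσ i) (hw _)) _, ← rpow_mul hc.le,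
    show -η * (-1 / η) = 1 by field_simp, rpow_one, blockExpo]

lemma toReal_prob_forall_blockMax_le (hσ : ∀ i, 0 < σ i) (hη : 0 < η)
    (hpos : ∀ t : Fin d → ℝ, (∀ i, 0 < t i) → 0 < jointF X t)
    {v : Fin p → ℝ} (hv : ∀ j, v j ∈ Ioo 0 1) :
    (ℙ {ω | ∀ j, blockMax B σ η X j ω ≤ v j}).toReal =
      exp (-blockExpo X σ η B fun j => -log (v j)) := by
  have hset : {ω | ∀ j, blockMax B σ η X j ω ≤ v j} =
      {ω | ∀ i, X i ω ≤ (σ i / -log (v (B i))) ^ η} := by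
    ext ω
    simp only [mem_ofPred_eq, blockMax_le_iff_of_mem_Ioo hσ hη (hv _)]
    exact ⟨fun h i => h (B i) i rfl, fun h j i hi => hi ▸ h i⟩
  rw [hset]
  exact jointF_eq_exp_neg_expo hpos
    fun i => rpow_pos_of_pos (div_pos (hσ i) (neg_pos.2 (log_neg (hv _).1 (hv _).2))) _

lemma toReal_prob_iSup_rpow_le (hσ : ∀ i, 0 < σ i) (hη : 0 < η)
    (hpos : ∀ t : Fin d → ℝ, (∀ i, 0 < t i) → 0 < jointF X t)
    (hhom : ∀ c : ℝ, 0 < c → ∀ t : Fin d → ℝ, (∀ i, 0 < t i) →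
      expo X (fun i => c * t i) = c ^ (-1 / η) * expo X t)
    {l : Fin p → ℝ} (hl : ∀ j, 0 < l j) {u : ℝ} (hu : u ∈ Ioo 0 1) :
    (ℙ {ω | ⨆ j, blockMax B σ η X j ω ^ (l j)⁻¹ ≤ u}).toReal = u ^ blockExpo X σ η B l := by
  have hset : {ω | ⨆ j, blockMax B σ η X j ω ^ (l j)⁻¹ ≤ u} =
      {ω | ∀ j, blockMax B σ η X j ω ≤ u ^ l j} := by
    ext ω
    simp only [mem_ofPred_eq, ← rpow_inv_le_iff_of_pos (blockMax_nonneg _ ω) hu.1.le (hl _)]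
    exact ⟨fun h j => (le_ciSup (Finite.bddAbove_range _) j).trans h,
      fun h => Real.iSup_le h hu.1.le⟩
  have hscale : (fun j => -log (u ^ l j)) = (-log u) • l := by
    ext j
    rw [log_rpow hu.1, Pi.smul_apply, smul_eq_mul]
    ring
  rw [hset, toReal_prob_forall_blockMax_le hσ hη hpos
      fun j => ⟨rpow_pos_of_pos hu.1 _, rpow_lt_one hu.1.le hu.2 (hl j)⟩, hscale,
    blockExpo_smul hσ hη hhom (neg_pos.2 (log_neg hu.1 hu.2)) hl, rpow_def_of_pos hu.1]
  ring_nf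

variable [IsProbabilityMeasure (ℙ : Measure Ω)]

lemma expo_nonneg (t : Fin d → ℝ) : 0 ≤ expo X t :=
  neg_nonneg.2 (log_nonpos ENNReal.toReal_nonneg measureReal_le_one)

lemma expo_antitone (hpos : ∀ t : Fin d → ℝ, (∀ i, 0 < t i) → 0 < jointF X t)
    {t t' : Fin d → ℝ} (ht : ∀ i, 0 < t i) (h : t ≤ t') : expo X t' ≤ expo X t :=
  neg_le_neg <| log_le_log (hpos t ht) <| ENNReal.toReal_mono (measure_ne_top _ _) <|
    measure_mono fun _ hω i => (hω i).trans (h i)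

lemma blockExpo_nonneg (w : Fin p → ℝ) : 0 ≤ blockExpo X σ η B w :=
  expo_nonneg _

lemma blockExpo_mono (hσ : ∀ i, 0 < σ i) (hη : 0 < η)
    (hpos : ∀ t : Fin d → ℝ, (∀ i, 0 < t i) → 0 < jointF X t)
    {w w' : Fin p → ℝ} (hw : ∀ j, 0 < w j) (h : w ≤ w') :
    blockExpo X σ η B w ≤ blockExpo X σ η B w' :=
  expo_antitone hpos (fun i => rpow_pos_of_pos (div_pos (hσ i) ((hw _).trans_le (h _))) _)
    fun i => rpow_le_rpow (div_pos (hσ i) ((hw _).trans_le (h _))).le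
      (div_le_div_of_nonneg_left (hσ i).le (hw _) (h _)) hη.le

end JointLaw

section BlockMarginal

variable {Ω : Type*} [MeasureSpace Ω] [IsProbabilityMeasure (ℙ : Measure Ω)] {d p : ℕ}
  {X : Fin d → Ω → ℝ} {σ : Fin d → ℝ} {η : ℝ} {B : Fin d → Fin p}

variable (X) in
def jointFOn (P : Fin d → Prop) (t : Fin d → ℝ) : ℝ :=
  (ℙ {ω | ∀ i, P i → X i ω ≤ t i}).toReal

lemma jointF_ite_le_jointFOn (P : Fin d → Prop) [DecidablePred P] (t : Fin d → ℝ) (m : ℝ) :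
    jointF X (fun i => if P i then t i else m) ≤ jointFOn X P t :=
  ENNReal.toReal_mono (measure_ne_top _ _) <| measure_mono fun ω hω i hi => by
    simpa [hi] using hω i

lemma tendsto_jointF_ite (P : Fin d → Prop) [DecidablePred P] (t : Fin d → ℝ) :
    Tendsto (fun m => jointF X fun i => if P i then t i else m) atTop (𝓝 (jointFOn X P t)) := by
  set E : ℝ → Set Ω := fun m => {ω | ∀ i, X i ω ≤ if P i then t i else m}
  have hmono : Monotone E := fun m m' hm ω hω i => (hω i).trans (by split_ifs <;> simp [hm])
  have hunion : ⋃ m, E m = {ω | ∀ i, P i → X i ω ≤ t i} := by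
    ext ω
    simp only [E, mem_iUnion, mem_ofPred_eq]
    refine ⟨fun ⟨m, hm⟩ i hi => by simpa [hi] using hm i, fun h => ⟨∑ i, |X i ω|, fun i => ?_⟩⟩
    split_ifs with hi
    · exact h i hi
    · exact (le_abs_self _).trans
        (Finset.single_le_sum (fun j _ => abs_nonneg (X j ω)) (Finset.mem_univ i))
  have := (ENNReal.tendsto_toReal (measure_ne_top ℙ _)).comp
    (tendsto_measure_iUnion_atTop (μ := ℙ) hmono)
  rw [hunion] at this
  exact this

lemma jointFOn_pos (hpos : ∀ t : Fin d → ℝ, (∀ i, 0 < t i) → 0 < jointF X t)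
    (P : Fin d → Prop) {t : Fin d → ℝ} (ht : ∀ i, 0 < t i) : 0 < jointFOn X P t := by
  classical
  exact (hpos _ fun i => by split_ifs <;> simp [ht]).trans_le (jointF_ite_le_jointFOn P t 1)

/-- Homogeneity passes to the subvector, as it is the limit of the full vector with the other
coordinates sent to `∞`. -/
lemma jointFOn_mul (hpos : ∀ t : Fin d → ℝ, (∀ i, 0 < t i) → 0 < jointF X t)
    (hhom : ∀ c : ℝ, 0 < c → ∀ t : Fin d → ℝ, (∀ i, 0 < t i) →
      expo X (fun i => c * t i) = c ^ (-1 / η) * expo X t)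
    (P : Fin d → Prop) {c : ℝ} (hc : 0 < c) {t : Fin d → ℝ} (ht : ∀ i, 0 < t i) :
    jointFOn X P (fun i => c * t i) = jointFOn X P t ^ c ^ (-1 / η) := by
  classical
  have hscaled := (tendsto_jointF_ite (X := X) P fun i => c * t i).comp
    (tendsto_id.const_mul_atTop hc)
  have hpow := (tendsto_jointF_ite (X := X) P t).rpow_const
    (Or.inr (rpow_pos_of_pos hc (-1 / η)).le)
  refine tendsto_nhds_unique hscaled (hpow.congr' ?_)
  filter_upwards [eventually_gt_atTop 0] with m hm
  have hpad : ∀ i, 0 < if P i then t i else m := fun i => by split_ifs <;> simp [ht, hm]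
  simp only [Function.comp_apply, id, ← jointF_mul hpos hhom hc hpad]
  congr 1
  ext i
  split_ifs <;> rfl

variable (X σ η B) in
/-- The extremal coefficient `θ_j` of block `j`: `M(I_j)` has distribution function `u ^ θ_j`
on `(0, 1)` (`toReal_prob_blockMax_le`). -/
def extremalCoeff (j : Fin p) : ℝ :=
  -log (jointFOn X (B · = j) fun i => σ i ^ η)

lemma toReal_prob_blockMax_le (hσ : ∀ i, 0 < σ i) (hη : 0 < η)
    (hpos : ∀ t : Fin d → ℝ, (∀ i, 0 < t i) → 0 < jointF X t)
    (hhom : ∀ c : ℝ, 0 < c → ∀ t : Fin d → ℝ, (∀ i, 0 < t i) →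
      expo X (fun i => c * t i) = c ^ (-1 / η) * expo X t)
    (j : Fin p) {u : ℝ} (hu : u ∈ Ioo 0 1) :
    (ℙ {ω | blockMax B σ η X j ω ≤ u}).toReal = u ^ extremalCoeff X σ η B j := by
  set c := -log u
  have hc : 0 < c := neg_pos.2 (log_neg hu.1 hu.2)
  have hthr : ∀ i, (σ i / c) ^ η = c ^ (-η) * σ i ^ η := fun i => by
    rw [div_rpow (hσ i).le hc.le, rpow_neg hc.le, inv_mul_eq_div]
  have hG := jointFOn_pos hpos (B · = j) fun i => rpow_pos_of_pos (hσ i) η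
  have hset : {ω | blockMax B σ η X j ω ≤ u} = {ω | ∀ i, B i = j → X i ω ≤ (σ i / c) ^ η} := by
    ext ω
    exact blockMax_le_iff_of_mem_Ioo hσ hη hu j ω
  change (ℙ _).toReal = _
  rw [hset, ← jointFOn, funext hthr, jointFOn_mul hpos hhom _ (rpow_pos_of_pos hc _)
    fun i => rpow_pos_of_pos (hσ i) η, ← rpow_mul hc.le, show -η * (-1 / η) = 1 by field_simp,
    rpow_one, rpow_def_of_pos hG, rpow_def_of_pos hu.1, extremalCoeff]
  congr 1
  simp only [c]
  ring

lemma extremalCoeff_nonneg (j : Fin p) : 0 ≤ extremalCoeff X σ η B j :=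
  neg_nonneg.2 (log_nonpos ENNReal.toReal_nonneg measureReal_le_one)

lemma extremalCoeff_pos (hσ : ∀ i, 0 < σ i) (hη : 0 < η)
    (hmarg : ∀ i, ∀ t : ℝ, 0 < t →
      ℙ {ω | X i ω ≤ t} = ENNReal.ofReal (Real.exp (-σ i * t ^ (-1 / η))))
    (hpos : ∀ t : Fin d → ℝ, (∀ i, 0 < t i) → 0 < jointF X t)
    {j : Fin p} (hj : ∃ i, B i = j) : 0 < extremalCoeff X σ η B j := by
  obtain ⟨i, hi⟩ := hj
  have hση := rpow_pos_of_pos (hσ i) η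
  have hle : jointFOn X (B · = j) (fun i => σ i ^ η) ≤ exp (-1) := by
    calc jointFOn X (B · = j) (fun i => σ i ^ η)
        ≤ (ℙ {ω | X i ω ≤ σ i ^ η}).toReal :=
          ENNReal.toReal_mono (measure_ne_top _ _) (measure_mono fun ω hω => hω i hi)
      _ = exp (-1) := by
          rw [hmarg i _ hση, ENNReal.toReal_ofReal (exp_nonneg _), ← rpow_mul (hσ i).le,
            show η * (-1 / η) = -1 by field_simp, rpow_neg_one, neg_mul,
            mul_inv_cancel₀ (hσ i).ne']
  exact neg_pos.2 (log_neg (jointFOn_pos hpos _ fun _ => rpow_pos_of_pos (hσ _) η)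
    (hle.trans_lt (exp_lt_one_iff.2 (by norm_num))))

end BlockMarginal

section Moments

variable {Ω : Type*} [MeasureSpace Ω]

lemma eventually_measure_pos_of_tendsto_mul {s : ℝ → Set Ω} {a : ℝ} (ha : 0 < a)
    (h : Tendsto (fun t => t * (ℙ (s t)).toReal) atTop (𝓝 a)) : ∀ᶠ t in atTop, 0 < ℙ (s t) :=
  (h.eventually_const_lt ha).mono fun t ht => pos_iff_ne_zero.2 fun h0 => by simp [h0] at ht

variable [IsProbabilityMeasure (ℙ : Measure Ω)]

lemma toReal_prob_lt_eq_one_sub {Y : Ω → ℝ} (hY : Measurable Y) (u : ℝ) :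
    (ℙ {ω | u < Y ω}).toReal = 1 - (ℙ {ω | Y ω ≤ u}).toReal := by
  have hcompl : {ω | u < Y ω} = {ω | Y ω ≤ u}ᶜ := by ext; simp
  rw [hcompl]
  exact probReal_compl_eq_one_sub (hY measurableSet_Iic)

lemma toReal_prob_lt_and_lt {Y Z : Ω → ℝ} (hY : Measurable Y) (hZ : Measurable Z) (a b : ℝ) :
    (ℙ {ω | a < Y ω ∧ b < Z ω}).toReal = (1 - (ℙ {ω | Y ω ≤ a}).toReal) +
      (1 - (ℙ {ω | Z ω ≤ b}).toReal) - (1 - (ℙ {ω | Y ω ≤ a ∧ Z ω ≤ b}).toReal) := by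
  have hcompl : {ω | a < Y ω ∧ b < Z ω} = ({ω | Y ω ≤ a} ∪ {ω | Z ω ≤ b})ᶜ := by ext; simp
  have hYa : MeasurableSet {ω | Y ω ≤ a} := hY measurableSet_Iic
  have hZb : MeasurableSet {ω | Z ω ≤ b} := hZ measurableSet_Iic
  have hunion := measureReal_union_add_inter (μ := ℙ) (s := {ω | Y ω ≤ a}) hZb
  rw [hcompl]
  change (ℙ : Measure Ω).real _ = _
  rw [probReal_compl_eq_one_sub (hYa.union hZb)]
  change _ = (1 - (ℙ : Measure Ω).real _) + (1 - (ℙ : Measure Ω).real _) -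
    (1 - (ℙ : Measure Ω).real ({ω | Y ω ≤ a} ∩ {ω | Z ω ≤ b}))
  linarith

/-- Layer cake: `E Y = ∫₀¹ (1 - t ^ θ) dt`. -/
lemma integral_eq_div_of_toReal_prob_le_eq_rpow {Y : Ω → ℝ} (hY : Measurable Y)
    (h0 : ∀ ω, 0 ≤ Y ω) (h1 : ∀ ω, Y ω ≤ 1) {θ : ℝ} (hθ : 0 ≤ θ)
    (hlaw : ∀ u ∈ Ioo (0 : ℝ) 1, (ℙ {ω | Y ω ≤ u}).toReal = u ^ θ) :
    ∫ ω, Y ω = θ / (θ + 1) := by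
  have hint : Integrable Y ℙ :=
    (integrable_const (1 : ℝ)).mono' hY.aestronglyMeasurable
      (ae_of_all _ fun ω => by rw [Real.norm_eq_abs, abs_of_nonneg (h0 ω)]; exact h1 ω)
  have htail : ∀ t ∈ Ioi (0 : ℝ),
      (ℙ : Measure Ω).real {ω | t < Y ω} = (Ioc 0 1).indicator (fun t => 1 - t ^ θ) t := by
    intro t ht
    rcases lt_or_ge t 1 with ht1 | ht1
    · rw [indicator_of_mem (show t ∈ Ioc 0 1 from ⟨ht, ht1.le⟩), ← hlaw t ⟨ht, ht1⟩]
      exact toReal_prob_lt_eq_one_sub hY t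
    · have hempty : {ω | t < Y ω} = ∅ :=
        eq_empty_of_forall_notMem fun ω hω => (h1 ω).not_gt (ht1.trans_lt hω)
      rw [hempty, measureReal_empty]
      rcases ht1.eq_or_lt with rfl | ht1
      · simp
      · exact (indicator_of_notMem (fun h => ht1.not_ge h.2) _).symm
  rw [hint.integral_eq_integral_meas_lt (ae_of_all _ h0),
    setIntegral_congr_fun measurableSet_Ioi htail, setIntegral_indicator measurableSet_Ioc,
    inter_eq_right.2 Ioc_subset_Ioi_self, ← intervalIntegral.integral_of_le zero_le_one,
    intervalIntegral.integral_sub intervalIntegrable_const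
      (intervalIntegral.intervalIntegrable_rpow' (by linarith)),
    integral_rpow (Or.inl (by linarith)), intervalIntegral.integral_const, one_rpow,
    zero_rpow (by linarith)]
  field_simp
  ring

lemma integral_div_one_sub_integral_eq {Y : Ω → ℝ} (hY : Measurable Y)
    (h0 : ∀ ω, 0 ≤ Y ω) (h1 : ∀ ω, Y ω ≤ 1) {θ : ℝ} (hθ : 0 ≤ θ)
    (hlaw : ∀ u ∈ Ioo (0 : ℝ) 1, (ℙ {ω | Y ω ≤ u}).toReal = u ^ θ) :
    (∫ ω, Y ω) / (1 - ∫ ω, Y ω) = θ := by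
  rw [integral_eq_div_of_toReal_prob_le_eq_rpow hY h0 h1 hθ hlaw]
  field_simp
  ring

end Moments

section TailDependence

variable {Ω : Type*} [MeasureSpace Ω] [IsProbabilityMeasure (ℙ : Measure Ω)] {d p : ℕ}
  {X : Fin d → Ω → ℝ} {σ : Fin d → ℝ} {η : ℝ} {B : Fin d → Fin p}

lemma epsBlock_eq_extremalCoeff (hX : ∀ i, Measurable (X i)) (hσ : ∀ i, 0 < σ i) (hη : 0 < η)
    (hpos : ∀ t : Fin d → ℝ, (∀ i, 0 < t i) → 0 < jointF X t)
    (hhom : ∀ c : ℝ, 0 < c → ∀ t : Fin d → ℝ, (∀ i, 0 < t i) →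
      expo X (fun i => c * t i) = c ^ (-1 / η) * expo X t)
    (j : Fin p) : epsBlock B σ η X j 1 = extremalCoeff X σ η B j := by
  simp only [epsBlock, rpow_one]
  exact integral_div_one_sub_integral_eq (measurable_blockMax hX j) (blockMax_nonneg j)
    (blockMax_le_one (fun i => (hσ i).le) j) (extremalCoeff_nonneg j)
    fun u hu => toReal_prob_blockMax_le hσ hη hpos hhom j hu

lemma epsFun_inv_eq_blockExpo (hX : ∀ i, Measurable (X i)) (hσ : ∀ i, 0 < σ i) (hη : 0 < η)
    (hpos : ∀ t : Fin d → ℝ, (∀ i, 0 < t i) → 0 < jointF X t)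
    (hhom : ∀ c : ℝ, 0 < c → ∀ t : Fin d → ℝ, (∀ i, 0 < t i) →
      expo X (fun i => c * t i) = c ^ (-1 / η) * expo X t)
    {l : Fin p → ℝ} (hl : ∀ j, 0 < l j) :
    epsFun B σ η X (fun j => (l j)⁻¹) = blockExpo X σ η B l :=
  integral_div_one_sub_integral_eq
    (Measurable.iSup fun j => (measurable_blockMax hX j).pow_const _)
    (fun ω => Real.iSup_nonneg fun j => rpow_nonneg (blockMax_nonneg j ω) _)
    (fun ω => Real.iSup_le (fun j => rpow_le_one (blockMax_nonneg j ω)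
      (blockMax_le_one (fun i => (hσ i).le) j ω) (inv_nonneg.2 (hl j).le)) zero_le_one)
    (blockExpo_nonneg l) fun _ hu => toReal_prob_iSup_rpow_le hσ hη hpos hhom hl hu

lemma tendsto_mul_one_sub_toReal_prob_blockMax_le (hσ : ∀ i, 0 < σ i) (hη : 0 < η)
    (hpos : ∀ t : Fin d → ℝ, (∀ i, 0 < t i) → 0 < jointF X t)
    (hhom : ∀ c : ℝ, 0 < c → ∀ t : Fin d → ℝ, (∀ i, 0 < t i) →
      expo X (fun i => c * t i) = c ^ (-1 / η) * expo X t)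
    (j : Fin p) {l : ℝ} (hl : 0 < l) :
    Tendsto (fun t => t * (1 - (ℙ {ω | blockMax B σ η X j ω ≤ 1 - l / t}).toReal)) atTop
      (𝓝 (l * extremalCoeff X σ η B j)) := by
  have hlim : Tendsto (fun t => t * (extremalCoeff X σ η B j * -log (1 - l / t))) atTop
      (𝓝 (l * extremalCoeff X σ η B j)) := by
    simpa [mul_left_comm, mul_comm l] using
      (tendsto_mul_neg_log_one_sub_div l).const_mul (extremalCoeff X σ η B j)
  refine (tendsto_mul_one_sub_exp_neg hlim).congr' ?_
  filter_upwards [eventually_gt_atTop l] with t ht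
  have hu := one_sub_div_mem_Ioo hl ht
  rw [toReal_prob_blockMax_le hσ hη hpos hhom j hu, rpow_def_of_pos hu.1]
  ring_nf

lemma tendsto_mul_one_sub_toReal_prob_forall_blockMax_le (hσ : ∀ i, 0 < σ i) (hη : 0 < η)
    (hpos : ∀ t : Fin d → ℝ, (∀ i, 0 < t i) → 0 < jointF X t)
    (hhom : ∀ c : ℝ, 0 < c → ∀ t : Fin d → ℝ, (∀ i, 0 < t i) →
      expo X (fun i => c * t i) = c ^ (-1 / η) * expo X t)
    {l : Fin p → ℝ} (hl : ∀ j, 0 < l j) :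
    Tendsto (fun t => t * (1 - (ℙ {ω | ∀ j, blockMax B σ η X j ω ≤ 1 - l j / t}).toReal))
      atTop (𝓝 (blockExpo X σ η B l)) := by
  have hlarge : ∀ᶠ t in atTop, 0 < t ∧ ∀ j, 1 - l j / t ∈ Ioo 0 1 :=
    (eventually_gt_atTop 0).and <| eventually_all.2 fun j =>
      (eventually_gt_atTop (l j)).mono fun t ht => one_sub_div_mem_Ioo (hl j) ht
  have hw : Tendsto (fun t => t • fun j => -log (1 - l j / t)) atTop (𝓝 l) :=
    tendsto_pi_nhds.2 fun j => tendsto_mul_neg_log_one_sub_div (l j)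
  have hlim : Tendsto (fun t => t * blockExpo X σ η B fun j => -log (1 - l j / t)) atTop
      (𝓝 (blockExpo X σ η B l)) := by
    refine (tendsto_comp_of_monotone_of_homogeneous
      (fun _ _ hv hvw => blockExpo_mono hσ hη hpos hv hvw)
      (fun c hc v hv => blockExpo_smul hσ hη hhom hc hv) hl hw).congr' ?_
    filter_upwards [hlarge] with t ⟨ht, hu⟩
    exact blockExpo_smul hσ hη hhom ht fun j => neg_pos.2 (log_neg (hu j).1 (hu j).2)
  refine (tendsto_mul_one_sub_exp_neg hlim).congr' ?_
  filter_upwards [hlarge] with t ⟨_, hu⟩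
  rw [toReal_prob_forall_blockMax_le hσ hη hpos hu]

lemma tendsto_mul_toReal_prob_blockMax_gt (hX : ∀ i, Measurable (X i)) (hσ : ∀ i, 0 < σ i)
    (hη : 0 < η) (hpos : ∀ t : Fin d → ℝ, (∀ i, 0 < t i) → 0 < jointF X t)
    (hhom : ∀ c : ℝ, 0 < c → ∀ t : Fin d → ℝ, (∀ i, 0 < t i) →
      expo X (fun i => c * t i) = c ^ (-1 / η) * expo X t)
    (j : Fin p) {l : ℝ} (hl : 0 < l) :
    Tendsto (fun t => t * (ℙ {ω | 1 - l / t < blockMax B σ η X j ω}).toReal) atTop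
      (𝓝 (l * extremalCoeff X σ η B j)) := by
  simp only [toReal_prob_lt_eq_one_sub (measurable_blockMax hX j)]
  exact tendsto_mul_one_sub_toReal_prob_blockMax_le hσ hη hpos hhom j hl

lemma tendsto_mul_toReal_prob_blockMax_gt_and {B : Fin d → Fin 2} (hX : ∀ i, Measurable (X i))
    (hσ : ∀ i, 0 < σ i) (hη : 0 < η) (hpos : ∀ t : Fin d → ℝ, (∀ i, 0 < t i) → 0 < jointF X t)
    (hhom : ∀ c : ℝ, 0 < c → ∀ t : Fin d → ℝ, (∀ i, 0 < t i) →
      expo X (fun i => c * t i) = c ^ (-1 / η) * expo X t)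
    {l₁ l₂ : ℝ} (hl₁ : 0 < l₁) (hl₂ : 0 < l₂) :
    Tendsto (fun t => t * (ℙ {ω | 1 - l₁ / t < blockMax B σ η X 0 ω ∧
        1 - l₂ / t < blockMax B σ η X 1 ω}).toReal) atTop
      (𝓝 (l₁ * extremalCoeff X σ η B 0 + l₂ * extremalCoeff X σ η B 1 -
        blockExpo X σ η B ![l₁, l₂])) := by
  have hboth := tendsto_mul_one_sub_toReal_prob_forall_blockMax_le (B := B) hσ hη hpos hhom
    (l := ![l₁, l₂]) (Fin.forall_fin_two.2 ⟨hl₁, hl₂⟩)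
  simp only [Fin.forall_fin_two, Matrix.cons_val_zero, Matrix.cons_val_one] at hboth
  refine (((tendsto_mul_one_sub_toReal_prob_blockMax_le hσ hη hpos hhom 0 hl₁).add
    (tendsto_mul_one_sub_toReal_prob_blockMax_le hσ hη hpos hhom 1 hl₂)).sub hboth).congr
      fun t => ?_
  rw [toReal_prob_lt_and_lt (measurable_blockMax hX 0) (measurable_blockMax hX 1)]
  ring

end TailDependence

theorem statement10_general
    {Ω : Type*} [MeasureSpace Ω] [IsProbabilityMeasure (ℙ : Measure Ω)]
    {d : ℕ}
    (X : Fin d → Ω → ℝ) (hX : ∀ i, Measurable (X i))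
    (σ : Fin d → ℝ) (hσ : ∀ i, 0 < σ i)
    (η : ℝ) (hη0 : 0 < η)
    (hmarg : ∀ i, ∀ t : ℝ, 0 < t →
      ℙ {ω | X i ω ≤ t} = ENNReal.ofReal (Real.exp (-σ i * t ^ (-1 / η))))
    (hpos : ∀ t : Fin d → ℝ, (∀ i, 0 < t i) → 0 < jointF X t)
    (hhom : ∀ c : ℝ, 0 < c → ∀ t : Fin d → ℝ, (∀ i, 0 < t i) →
      expo X (fun i => c * t i) = c ^ (-1 / η) * expo X t)
    (B : Fin d → Fin 2) (hB : Function.Surjective B)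
    (l1 l2 : ℝ) (hl1 : 0 < l1) (hl2 : 0 < l2) :
    (∀ᶠ t : ℝ in atTop, 0 < ℙ {ω | 1 - l2 / t < blockMax B σ η X 1 ω}) ∧
    (∀ᶠ t : ℝ in atTop, 0 < ℙ {ω | 1 - l1 / t < blockMax B σ η X 0 ω}) ∧
    Tendsto (fun t : ℝ => l2 * epsBlock B σ η X 1 1 *
        ((ℙ {ω | 1 - l1 / t < blockMax B σ η X 0 ω ∧
            1 - l2 / t < blockMax B σ η X 1 ω}).toReal /
          (ℙ {ω | 1 - l2 / t < blockMax B σ η X 1 ω}).toReal)) atTop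
      (𝓝 (l1 * epsBlock B σ η X 0 1 + l2 * epsBlock B σ η X 1 1 -
        epsFun B σ η X ![l1⁻¹, l2⁻¹])) ∧
    Tendsto (fun t : ℝ => l1 * epsBlock B σ η X 0 1 *
        ((ℙ {ω | 1 - l1 / t < blockMax B σ η X 0 ω ∧
            1 - l2 / t < blockMax B σ η X 1 ω}).toReal /
          (ℙ {ω | 1 - l1 / t < blockMax B σ η X 0 ω}).toReal)) atTop
      (𝓝 (l1 * epsBlock B σ η X 0 1 + l2 * epsBlock B σ η X 1 1 -
        epsFun B σ η X ![l1⁻¹, l2⁻¹])) := by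
  have hθ : ∀ j, 0 < extremalCoeff X σ η B j :=
    fun j => extremalCoeff_pos hσ hη0 hmarg hpos (hB j)
  have hexceed₀ := tendsto_mul_toReal_prob_blockMax_gt (B := B) hX hσ hη0 hpos hhom 0 hl1
  have hexceed₁ := tendsto_mul_toReal_prob_blockMax_gt (B := B) hX hσ hη0 hpos hhom 1 hl2
  have hboth := tendsto_mul_toReal_prob_blockMax_gt_and (B := B) hX hσ hη0 hpos hhom hl1 hl2
  have hinv : ![l1⁻¹, l2⁻¹] = fun j => (![l1, l2] j)⁻¹ := by
    ext j
    fin_cases j <;> rfl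
  rw [epsBlock_eq_extremalCoeff hX hσ hη0 hpos hhom, epsBlock_eq_extremalCoeff hX hσ hη0 hpos hhom,
    hinv, epsFun_inv_eq_blockExpo hX hσ hη0 hpos hhom (Fin.forall_fin_two.2 ⟨hl1, hl2⟩)]
  exact ⟨eventually_measure_pos_of_tendsto_mul (mul_pos hl2 (hθ 1)) hexceed₁,
    eventually_measure_pos_of_tendsto_mul (mul_pos hl1 (hθ 0)) hexceed₀,
    tendsto_mul_div_of_tendsto_mul hboth hexceed₁ (mul_pos hl2 (hθ 1)).ne',
    tendsto_mul_div_of_tendsto_mul hboth hexceed₀ (mul_pos hl1 (hθ 0)).ne'⟩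

theorem statement10
    {Ω : Type*} [MeasureSpace Ω] [IsProbabilityMeasure (ℙ : Measure Ω)]
    {d : ℕ} (hd : 0 < d)
    (X : Fin d → Ω → ℝ) (hX : ∀ i, Measurable (X i))
    (σ : Fin d → ℝ) (hσ : ∀ i, 0 < σ i)
    (η : ℝ) (hη0 : 0 < η) (hη1 : η ≤ 1)
    (hmarg : ∀ i, ∀ t : ℝ, 0 < t →
      ℙ {ω | X i ω ≤ t} = ENNReal.ofReal (Real.exp (-σ i * t ^ (-1 / η))))
    (hpos : ∀ t : Fin d → ℝ, (∀ i, 0 < t i) → 0 < jointF X t)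
    (hhom : ∀ c : ℝ, 0 < c → ∀ t : Fin d → ℝ, (∀ i, 0 < t i) →
      expo X (fun i => c * t i) = c ^ (-1 / η) * expo X t)
    (B : Fin d → Fin 2) (hB : Function.Surjective B)
    (l1 l2 : ℝ) (hl1 : 0 < l1) (hl2 : 0 < l2) :
    (∀ᶠ t : ℝ in atTop, 0 < ℙ {ω | 1 - l2 / t < blockMax B σ η X 1 ω}) ∧
    (∀ᶠ t : ℝ in atTop, 0 < ℙ {ω | 1 - l1 / t < blockMax B σ η X 0 ω}) ∧
    Tendsto (fun t : ℝ => l2 * epsBlock B σ η X 1 1 *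
        ((ℙ {ω | 1 - l1 / t < blockMax B σ η X 0 ω ∧
            1 - l2 / t < blockMax B σ η X 1 ω}).toReal /
          (ℙ {ω | 1 - l2 / t < blockMax B σ η X 1 ω}).toReal)) atTop
      (𝓝 (l1 * epsBlock B σ η X 0 1 + l2 * epsBlock B σ η X 1 1 -
        epsFun B σ η X ![l1⁻¹, l2⁻¹])) ∧
    Tendsto (fun t : ℝ => l1 * epsBlock B σ η X 0 1 *
        ((ℙ {ω | 1 - l1 / t < blockMax B σ η X 0 ω ∧
            1 - l2 / t < blockMax B σ η X 1 ω}).toReal /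
          (ℙ {ω | 1 - l1 / t < blockMax B σ η X 0 ω}).toReal)) atTop
      (𝓝 (l1 * epsBlock B σ η X 0 1 + l2 * epsBlock B σ η X 1 1 -
        epsFun B σ η X ![l1⁻¹, l2⁻¹])) :=
  statement10_general X hX σ hσ η hη0 hmarg hpos hhom B hB l1 l2 hl1 hl2
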